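/- Let μ ≥ 0, δ ∈ (0,1), and let N be a Poisson random variable with mean μ. Define Ū₊(μ,δ) := μ + (14/3)·log(1/δ) + 2·√(2·μ·log(1/δ)) and Ū₋(μ,δ) := max{0, μ − 2·√(2·μ·log(1/δ))}. Then with probability at least 1 − 2δ, the chain of inequalities Ū₋(μ,δ) ≤ U₋(N,δ) ≤ μ ≤ U₊(N,δ) ≤ Ū₊(μ,δ) holds. -/

import Mathlib

open MeasureTheory ProbabilityTheory Real
open scoped NNReal ENNReal

/-- Upper confidence bound: `U₊(N,δ) = 2·log(1/δ) + N + √(2·N·log(1/δ))`. -/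
noncomputable def Uplus (N δ : ℝ) : ℝ :=
  2 * Real.log (1 / δ) + N + Real.sqrt (2 * N * Real.log (1 / δ))

/-- Lower confidence bound: `U₋(N,δ) = max{0, N − √(2·N·log(1/δ))}`. -/
noncomputable def Uminus (N δ : ℝ) : ℝ :=
  max 0 (N - Real.sqrt (2 * N * Real.log (1 / δ)))

/-- Deterministic upper envelope: `Ū₊(μ,δ) = μ + (14/3)·log(1/δ) + 2·√(2·μ·log(1/δ))`. -/
noncomputable def UbarPlus (μ δ : ℝ) : ℝ :=
  μ + (14 / 3) * Real.log (1 / δ) + 2 * Real.sqrt (2 * μ * Real.log (1 / δ))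

/-- Deterministic lower envelope: `Ū₋(μ,δ) = max{0, μ − 2·√(2·μ·log(1/δ))}`. -/
noncomputable def UbarMinus (μ δ : ℝ) : ℝ :=
  max 0 (μ - 2 * Real.sqrt (2 * μ * Real.log (1 / δ)))

open scoped Nat

/-! With `ℓ = log (1 / δ)`, Chernoff's bound and the Poisson moment generating function
`exp (μ (eᵗ - 1))` give `P(N < μ - √(2μℓ)) ≤ δ` (using `e⁻ˢ ≤ 1 - s + s² / 2`) and
`P(N > μ + ℓ + √(2μℓ)) ≤ δ` (using Bernstein's `eᵗ ≤ 1 + t + t² / (2 (1 - t / 3))`).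
For every `N` in the window `μ - √(2μℓ) ≤ N ≤ μ + ℓ + √(2μℓ)` the four inequalities are
elementary comparisons between `√(2μℓ)` and `√(2Nℓ)`. -/

lemma exp_neg_le_one_sub_add_sq_div_two {s : ℝ} (hs : 0 ≤ s) : exp (-s) ≤ 1 - s + s ^ 2 / 2 := by
  rw [exp_neg, inv_le_iff_one_le_mul₀ (exp_pos s)]
  calc 1 ≤ (1 - s + s ^ 2 / 2) * (1 + s + s ^ 2 / 2) := by nlinarith [sq_nonneg (s ^ 2)]
    _ ≤ (1 - s + s ^ 2 / 2) * exp s :=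
      mul_le_mul_of_nonneg_left (quadratic_le_exp_of_nonneg hs) (by nlinarith [sq_nonneg (s - 1)])

/-- The exponential series is dominated termwise by a geometric one since `(n + 2)! ≥ 2 · 3 ^ n`. -/
lemma exp_le_one_add_add_sq_div_of_lt_three {t : ℝ} (ht : 0 ≤ t) (ht3 : t < 3) :
    exp t ≤ 1 + t + t ^ 2 / (2 * (1 - t / 3)) := by
  have htail : HasSum (fun n : ℕ ↦ t ^ (n + 2) / (n + 2)!) (exp t - (1 + t)) := by
    have := (hasSum_nat_add_iff' (f := fun n : ℕ ↦ t ^ n / n !) 2).mpr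
      (exp_eq_exp_ℝ ▸ NormedSpace.expSeries_div_hasSum_exp t)
    simpa [Finset.sum_range_succ] using this
  have hgeom : HasSum (fun n : ℕ ↦ t ^ 2 / 2 * (t / 3) ^ n) (t ^ 2 / 2 * (1 - t / 3)⁻¹) :=
    (hasSum_geometric_of_lt_one (by positivity) (by linarith)).mul_left _
  have hterm (n : ℕ) : t ^ (n + 2) / (n + 2)! ≤ t ^ 2 / 2 * (t / 3) ^ n := by
    have hfac : (2 * 3 ^ n : ℝ) ≤ (n + 2)! := by
      exact_mod_cast (Nat.factorial_mul_pow_le_factorial (m := 2) (n := n)).trans_eq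
        (by rw [add_comm])
    calc t ^ (n + 2) / (n + 2)! ≤ t ^ (n + 2) / (2 * 3 ^ n) :=
          div_le_div_of_nonneg_left (by positivity) (by positivity) hfac
      _ = t ^ 2 / 2 * (t / 3) ^ n := by rw [div_pow]; field_simp; ring
  have hle := hasSum_le hterm htail hgeom
  rw [div_mul_eq_div_div, div_eq_mul_inv (t ^ 2 / 2)]
  linarith

namespace ProbabilityTheory

lemma hasSum_poissonMeasure_mul_exp_mul (r : ℝ≥0) (t : ℝ) :
    HasSum (fun n : ℕ ↦ exp (-r) * r ^ n / n ! * exp (t * n)) (exp (r * (exp t - 1))) := by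
  have h := (NormedSpace.expSeries_div_hasSum_exp ((r : ℝ) * exp t)).mul_left (exp (-r))
  rw [← exp_eq_exp_ℝ, ← exp_add, show -(r : ℝ) + r * exp t = r * (exp t - 1) by ring] at h
  have hterm : (fun n : ℕ ↦ exp (-r) * r ^ n / n ! * exp (t * n)) =
      fun n : ℕ ↦ exp (-r) * ((r * exp t) ^ n / n !) := by
    ext n
    rw [mul_pow, ← exp_nat_mul, mul_comm (n : ℝ) t]
    ring
  rw [hterm]
  exact h

lemma integrable_exp_mul_poissonMeasure (r : ℝ≥0) (t : ℝ) :
    Integrable (fun n : ℕ ↦ exp (t * n)) (poissonMeasure r) := by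
  rw [integrable_poissonMeasure_iff]
  simpa only [norm_of_nonneg (exp_nonneg _)] using
    (hasSum_poissonMeasure_mul_exp_mul r t).summable

lemma mgf_poissonMeasure (r : ℝ≥0) (t : ℝ) :
    mgf (fun n : ℕ ↦ (n : ℝ)) (poissonMeasure r) t = exp (r * (exp t - 1)) := by
  rw [mgf, integral_poissonMeasure]
  exact (hasSum_poissonMeasure_mul_exp_mul r t).tsum_eq

lemma poissonMeasure_real_ge_le (r : ℝ≥0) {t : ℝ} (ht : 0 ≤ t) (ε : ℝ) :
    (poissonMeasure r).real {n | ε ≤ (n : ℝ)} ≤ exp (r * (exp t - 1) - t * ε) := by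
  have h := measure_ge_le_exp_mul_mgf ε ht (integrable_exp_mul_poissonMeasure r t)
  rwa [mgf_poissonMeasure, ← exp_add, neg_mul, neg_add_eq_sub] at h

lemma poissonMeasure_real_le_le (r : ℝ≥0) {t : ℝ} (ht : t ≤ 0) (ε : ℝ) :
    (poissonMeasure r).real {n | (n : ℝ) ≤ ε} ≤ exp (r * (exp t - 1) - t * ε) := by
  have h := measure_le_le_exp_mul_mgf ε ht (integrable_exp_mul_poissonMeasure r t)
  rwa [mgf_poissonMeasure, ← exp_add, neg_mul, neg_add_eq_sub] at h

lemma poissonMeasure_real_le_sub_le {r : ℝ≥0} (hr : 0 < r) {a : ℝ} (ha : 0 ≤ a) :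
    (poissonMeasure r).real {n | (n : ℝ) ≤ r - a} ≤ exp (-(a ^ 2 / (2 * r))) := by
  have hs : 0 ≤ a / r := by positivity
  refine (poissonMeasure_real_le_le r (neg_nonpos.2 hs) _).trans (exp_le_exp.2 ?_)
  have hexp := exp_neg_le_one_sub_add_sq_div_two hs
  have hr' : (0 : ℝ) < r := hr
  calc (r : ℝ) * (exp (-(a / r)) - 1) - -(a / r) * (r - a)
      ≤ r * (-(a / r) + (a / r) ^ 2 / 2) + a / r * (r - a) := by nlinarith
    _ = -(a ^ 2 / (2 * r)) := by field_simp; ring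

lemma poissonMeasure_real_add_le_le {r : ℝ≥0} (hr : 0 < r) {x : ℝ} (hx : 0 ≤ x) :
    (poissonMeasure r).real {n | r + x ≤ (n : ℝ)} ≤ exp (-(x ^ 2 / (2 * (r + x / 3)))) := by
  have hr' : (0 : ℝ) < r := hr
  set q : ℝ := r + x / 3 with hq_def
  have hq : 0 < q := by positivity
  have ht : 0 ≤ x / q := by positivity
  have ht3 : x / q < 3 := by rw [div_lt_iff₀ hq]; linarith
  refine (poissonMeasure_real_ge_le r ht _).trans (exp_le_exp.2 ?_)
  have hexp := exp_le_one_add_add_sq_div_of_lt_three ht ht3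
  have h13 : 1 - x / q / 3 = r / q := by field_simp; linarith
  have hfrac : (x / q) ^ 2 / (2 * (1 - x / q / 3)) = x ^ 2 / (2 * r * q) := by
    rw [h13]
    field_simp
  rw [hfrac] at hexp
  calc (r : ℝ) * (exp (x / q) - 1) - x / q * (r + x)
      ≤ r * (x / q + x ^ 2 / (2 * r * q)) - x / q * (r + x) := by nlinarith
    _ = -(x ^ 2 / (2 * q)) := by field_simp; ring

lemma poissonMeasure_real_lt_sub_sqrt_le (r : ℝ≥0) {ℓ : ℝ} (hℓ : 0 ≤ ℓ) :
    (poissonMeasure r).real {n | (n : ℝ) < r - √(2 * r * ℓ)} ≤ exp (-ℓ) := by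
  rcases eq_zero_or_pos r with rfl | hr
  · have hempty : {n : ℕ | (n : ℝ) < 0} = ∅ := Set.eq_empty_of_forall_notMem
      fun n h ↦ (Nat.cast_nonneg (α := ℝ) n).not_gt h
    simpa [hempty] using (exp_pos (-ℓ)).le
  have hsq : √(2 * r * ℓ) ^ 2 = 2 * r * ℓ := sq_sqrt (by positivity)
  have hr' : (0 : ℝ) < r := hr
  calc _ ≤ (poissonMeasure r).real {n | (n : ℝ) ≤ r - √(2 * r * ℓ)} :=
        measureReal_mono (Set.ofPred_subset_ofPred.2 fun _ ↦ le_of_lt)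
    _ ≤ exp (-(√(2 * r * ℓ) ^ 2 / (2 * r))) := poissonMeasure_real_le_sub_le hr (sqrt_nonneg _)
    _ = exp (-ℓ) := by rw [hsq]; field_simp

lemma poissonMeasure_real_add_sqrt_lt_le (r : ℝ≥0) {ℓ : ℝ} (hℓ : 0 ≤ ℓ) :
    (poissonMeasure r).real {n | r + ℓ + √(2 * r * ℓ) < (n : ℝ)} ≤ exp (-ℓ) := by
  rcases eq_zero_or_pos r with rfl | hr
  -- Bernstein's choice `t = x / (r + x / 3)` degenerates to `t = 3` at `r = 0`; `t = 1` suffices.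
  · calc _ ≤ (poissonMeasure 0).real {n | ℓ ≤ (n : ℝ)} :=
          measureReal_mono (Set.ofPred_subset_ofPred.2 fun _ h ↦ by simpa using h.le)
      _ ≤ exp (-ℓ) := by simpa using poissonMeasure_real_ge_le 0 zero_le_one ℓ
  set A := √(2 * r * ℓ)
  have hsq : A ^ 2 = 2 * r * ℓ := sq_sqrt (by positivity)
  have hA : 0 ≤ A := sqrt_nonneg _
  have hr' : (0 : ℝ) < r := hr
  calc _ ≤ (poissonMeasure r).real {n | r + (ℓ + A) ≤ (n : ℝ)} :=
        measureReal_mono (Set.ofPred_subset_ofPred.2 fun _ h ↦ by linarith)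
    _ ≤ exp (-((ℓ + A) ^ 2 / (2 * (r + (ℓ + A) / 3)))) :=
        poissonMeasure_real_add_le_le hr (by positivity)
    _ ≤ exp (-ℓ) := by
      refine exp_le_exp.2 (neg_le_neg ?_)
      rw [le_div_iff₀ (by positivity)]
      nlinarith [mul_nonneg hℓ hA]

end ProbabilityTheory

section
variable {m n δ : ℝ}

lemma UbarMinus_le_Uminus (hm : 0 ≤ m) (hℓ : 0 ≤ log (1 / δ))
    (h : m - √(2 * m * log (1 / δ)) ≤ n) : UbarMinus m δ ≤ Uminus n δ := by
  unfold UbarMinus Uminus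
  set ℓ := log (1 / δ)
  set A := √(2 * m * ℓ)
  refine max_le (le_max_left _ _) ?_
  rcases le_or_gt (m - 2 * A) 0 with hle | hgt
  · exact hle.trans (le_max_left _ _)
  have hA : 0 ≤ A := sqrt_nonneg _
  have hA2 : A ^ 2 = 2 * m * ℓ := sq_sqrt (by positivity)
  have hℓA : ℓ ≤ A := by nlinarith
  have hn : 0 ≤ n := by linarith
  have hB2 : √(2 * n * ℓ) ^ 2 = 2 * n * ℓ := sq_sqrt (by positivity)
  have hB : √(2 * n * ℓ) ≤ n - m + 2 * A := by
    nlinarith [sqrt_nonneg (2 * n * ℓ), mul_nonneg (sub_nonneg.2 h) (sub_nonneg.2 hℓA)]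
  exact le_max_of_le_right (by linarith)

lemma Uminus_le (hm : 0 ≤ m) (hn : 0 ≤ n) (hℓ : 0 ≤ log (1 / δ))
    (h : n ≤ m + log (1 / δ) + √(2 * m * log (1 / δ))) : Uminus n δ ≤ m := by
  unfold Uminus
  set ℓ := log (1 / δ)
  set A := √(2 * m * ℓ)
  refine max_le hm ?_
  have hA2 : A ^ 2 = 2 * m * ℓ := sq_sqrt (by positivity)
  have hB2 : √(2 * n * ℓ) ^ 2 = 2 * n * ℓ := sq_sqrt (by positivity)
  have hB : n - m ≤ √(2 * n * ℓ) := by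
    nlinarith [sqrt_nonneg (2 * n * ℓ), sqrt_nonneg (2 * m * ℓ), sq_nonneg (n - m - A)]
  linarith

lemma le_Uplus (hm : 0 ≤ m) (hn : 0 ≤ n) (hℓ : 0 ≤ log (1 / δ))
    (h : m - √(2 * m * log (1 / δ)) ≤ n) : m ≤ Uplus n δ := by
  unfold Uplus
  set ℓ := log (1 / δ)
  set A := √(2 * m * ℓ)
  have hA2 : A ^ 2 = 2 * m * ℓ := sq_sqrt (by positivity)
  have hB2 : √(2 * n * ℓ) ^ 2 = 2 * n * ℓ := sq_sqrt (by positivity)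
  have hA : A ≤ √(2 * n * ℓ) + 2 * ℓ := by
    nlinarith [sqrt_nonneg (2 * n * ℓ), sqrt_nonneg (2 * m * ℓ)]
  linarith

lemma Uplus_le_UbarPlus (hm : 0 ≤ m) (hn : 0 ≤ n) (hℓ : 0 ≤ log (1 / δ))
    (h : n ≤ m + log (1 / δ) + √(2 * m * log (1 / δ))) : Uplus n δ ≤ UbarPlus m δ := by
  unfold Uplus UbarPlus
  set ℓ := log (1 / δ)
  set A := √(2 * m * ℓ)
  have hA2 : A ^ 2 = 2 * m * ℓ := sq_sqrt (by positivity)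
  have hB2 : √(2 * n * ℓ) ^ 2 = 2 * n * ℓ := sq_sqrt (by positivity)
  have hB : √(2 * n * ℓ) ≤ A + 3 / 2 * ℓ := by
    nlinarith [sqrt_nonneg (2 * n * ℓ), sqrt_nonneg (2 * m * ℓ)]
  linarith
end

lemma ofReal_one_sub_le_of_measureReal_compl_le {Ω : Type*} [MeasurableSpace Ω] {P : Measure Ω}
    [IsProbabilityMeasure P] {s : Set Ω} {ε : ℝ} (hs : MeasurableSet s) (h : P.real sᶜ ≤ ε) :
    ENNReal.ofReal (1 - ε) ≤ P s := by
  rw [← ofReal_measureReal]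
  refine ENNReal.ofReal_le_ofReal ?_
  rw [probReal_compl_eq_one_sub hs] at h
  linarith

theorem poisson_confidence_sandwich (μ : ℝ≥0) (δ : ℝ) (hδ : δ ∈ Set.Ioo (0 : ℝ) 1) :
    ENNReal.ofReal (1 - 2 * δ) ≤
      poissonMeasure μ {n : ℕ |
        UbarMinus (μ : ℝ) δ ≤ Uminus (n : ℝ) δ ∧ Uminus (n : ℝ) δ ≤ (μ : ℝ) ∧
        (μ : ℝ) ≤ Uplus (n : ℝ) δ ∧ Uplus (n : ℝ) δ ≤ UbarPlus (μ : ℝ) δ} := by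
  obtain ⟨hδ0, hδ1⟩ := hδ
  have hℓ : 0 ≤ log (1 / δ) := log_nonneg (one_le_one_div hδ0 hδ1.le)
  have hδℓ : exp (-log (1 / δ)) = δ := by rw [one_div, log_inv, neg_neg, exp_log hδ0]
  set ℓ := log (1 / δ)
  set m := (μ : ℝ)
  set A := √(2 * m * ℓ)
  let G := {n : ℕ | m - A ≤ n ∧ n ≤ m + ℓ + A}
  have hGc : (poissonMeasure μ).real Gᶜ ≤ 2 * δ := calc
    _ ≤ (poissonMeasure μ).real ({n : ℕ | n < m - A} ∪ {n : ℕ | m + ℓ + A < n}) :=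
        measureReal_mono fun n hn ↦ by
          simpa only [G, Set.mem_compl_iff, Set.mem_union, Set.mem_ofPred_eq, not_and_or, not_le]
            using hn
    _ ≤ exp (-ℓ) + exp (-ℓ) := (measureReal_union_le _ _).trans <| add_le_add
        (poissonMeasure_real_lt_sub_sqrt_le μ hℓ) (poissonMeasure_real_add_sqrt_lt_le μ hℓ)
    _ = 2 * δ := by rw [hδℓ]; ring
  refine (ofReal_one_sub_le_of_measureReal_compl_le .of_discrete hGc).trans (measure_mono ?_)
  rintro n ⟨hlo, hhi⟩
  exact ⟨UbarMinus_le_Uminus μ.2 hℓ hlo, Uminus_le μ.2 n.cast_nonneg hℓ hhi,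
    le_Uplus μ.2 n.cast_nonneg hℓ hlo, Uplus_le_UbarPlus μ.2 n.cast_nonneg hℓ hhi⟩
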